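/- Let $E$ be a Banach space, $V$ the generator of a strongly continuous isometry group $e^{tV}$ on $E$, and $f \in \bigcap_k \mathrm{Dom}(V^k)$ with $\|V^k f\| \le \omega^k \|f\|$ for all $k$. Then for every $h \in E^*$, the function $t \mapsto h(e^{tV} f)$ extends to an entire function of exponential type at most $\omega$, bounded on $\mathbb{R}$ by $\|h\| \|f\|$, and its $k$-th derivative at $0$ equals $h(V^k f)$. -/

import Mathlib

/-!
Since `d/dt e^{tV} x = e^{tV} V x`, the orbit `t ↦ e^{tV} f` has derivatives `e^{tV} V^k f`, of
norm at most `ω^k ‖f‖` because the group is isometric. Taylor's formula with integral remainder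
then bounds the `n`-th remainder by `‖f‖ ω (ω |t|)^n |t| / n!`, so the Taylor series converges to
the orbit on all of `ℝ`. Applying `h` gives `h(e^{tV} f) = ∑ t^r h(V^r f) / r!`, and the same
coefficient bound `|h(V^r f)| ≤ ‖h‖ ‖f‖ ω^r` makes the series entire with
`|F(z)| ≤ ‖h‖ ‖f‖ e^{ω |z|}`.
-/

open scoped Nat
open Finset Filter Topology

section TaylorIntegralRemainder

variable {E : Type*} [NormedAddCommGroup E] [NormedSpace ℝ E]

lemma hasDerivAt_sub_pow_succ_div_factorial (t s : ℝ) (n : ℕ) :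
    HasDerivAt (fun s : ℝ => (t - s) ^ (n + 1) / (n + 1)!) (-((t - s) ^ n / n !)) s := by
  have h := (((hasDerivAt_id s).const_sub t).pow (n + 1)).div_const ((n + 1)! : ℝ)
  refine h.congr_deriv ?_
  rw [Nat.factorial_succ, Nat.cast_mul, Nat.add_sub_cancel, id]
  field_simp

lemma integral_sub_pow_div_factorial_smul_eq [CompleteSpace E] {g g' : ℝ → E}
    (hg : ∀ s, HasDerivAt g (g' s) s) (hg' : Continuous g') (t : ℝ) (n : ℕ) :
    ∫ s in (0 : ℝ)..t, ((t - s) ^ n / n !) • g s =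
      (t ^ (n + 1) / (n + 1)!) • g 0 +
        ∫ s in (0 : ℝ)..t, ((t - s) ^ (n + 1) / (n + 1)!) • g' s := by
  have hcont : Continuous g := continuous_iff_continuousAt.mpr fun s => (hg s).continuousAt
  have hibp := intervalIntegral.integral_smul_deriv_eq_deriv_smul_of_hasDerivAt (a := 0) (b := t)
    (by fun_prop) hcont.continuousOn
    (fun s _ => hasDerivAt_sub_pow_succ_div_factorial t s n) (fun s _ => hg s)
    ((by fun_prop : Continuous fun s : ℝ => -((t - s) ^ n / n !)).intervalIntegrable _ _)
    (hg'.intervalIntegrable _ _)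
  simp only [neg_smul, intervalIntegral.integral_neg, sub_self, sub_zero] at hibp
  rw [hibp]
  simp

theorem eq_sum_add_integral_of_hasDerivAt [CompleteSpace E] {g : ℕ → ℝ → E}
    (hg : ∀ k s, HasDerivAt (g k) (g (k + 1) s) s) (t : ℝ) (n : ℕ) :
    g 0 t = ∑ r ∈ range (n + 1), (t ^ r / r !) • g r 0 +
      ∫ s in (0 : ℝ)..t, ((t - s) ^ n / n !) • g (n + 1) s := by
  have hcont : ∀ k, Continuous (g k) := fun k =>
    continuous_iff_continuousAt.mpr fun s => (hg k s).continuousAt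
  induction n with
  | zero =>
    simp [intervalIntegral.integral_eq_sub_of_hasDerivAt (fun s _ => hg 0 s)
      ((hcont 1).intervalIntegrable _ _)]
  | succ n ih =>
    rw [ih, integral_sub_pow_div_factorial_smul_eq (hg (n + 1)) (hcont (n + 2)),
      sum_range_succ _ (n + 1)]
    abel

lemma norm_integral_sub_pow_div_factorial_smul_le {g : ℝ → E} {M : ℝ}
    (hM : ∀ s, ‖g s‖ ≤ M) (t : ℝ) (n : ℕ) :
    ‖∫ s in (0 : ℝ)..t, ((t - s) ^ n / n !) • g s‖ ≤ |t| ^ n / n ! * M * |t| := by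
  have hbound : ∀ s ∈ Set.uIoc (0 : ℝ) t, ‖((t - s) ^ n / n !) • g s‖ ≤ |t| ^ n / n ! * M := by
    intro s hs
    have hts : |t - s| ≤ |t| := by
      simpa using Set.abs_sub_right_of_mem_uIcc (Set.uIoc_subset_uIcc hs)
    rw [norm_smul, Real.norm_eq_abs, abs_div, abs_pow, Nat.abs_cast]
    exact mul_le_mul (by gcongr) (hM s) (norm_nonneg _) (by positivity)
  simpa using intervalIntegral.norm_integral_le_of_norm_le_const hbound

theorem hasSum_pow_div_factorial_smul_of_hasDerivAt [CompleteSpace E] {g : ℕ → ℝ → E}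
    {C ω : ℝ}
    (hg : ∀ k s, HasDerivAt (g k) (g (k + 1) s) s) (hbound : ∀ k s, ‖g k s‖ ≤ C * ω ^ k)
    (t : ℝ) : HasSum (fun r => (t ^ r / r !) • g r 0) (g 0 t) := by
  have hsummable : Summable fun r => ‖(t ^ r / r !) • g r 0‖ := by
    refine .of_nonneg_of_le (fun _ => norm_nonneg _) (fun r => ?_)
      ((Real.summable_pow_div_factorial (ω * |t|)).mul_left C)
    rw [norm_smul, Real.norm_eq_abs, abs_div, abs_pow, Nat.abs_cast]
    calc |t| ^ r / r ! * ‖g r 0‖ ≤ |t| ^ r / r ! * (C * ω ^ r) := by gcongr; exact hbound r 0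
      _ = C * ((ω * |t|) ^ r / r !) := by ring
  rw [hasSum_iff_tendsto_nat_of_summable_norm hsummable, ← tendsto_add_atTop_iff_nat 1,
    tendsto_iff_norm_sub_tendsto_zero]
  have hremainder :
      Tendsto (fun n : ℕ => |t| ^ n / n ! * (C * ω ^ (n + 1)) * |t|) atTop (𝓝 0) := by
    have h := ((Real.summable_pow_div_factorial (ω * |t|)).tendsto_atTop_zero).const_mul
      (C * ω * |t|)
    rw [mul_zero] at h
    refine h.congr fun n => ?_
    ring
  refine squeeze_zero (fun _ => norm_nonneg _) (fun n => ?_) hremainder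
  rw [eq_sum_add_integral_of_hasDerivAt hg t n, sub_add_cancel_left, norm_neg]
  exact norm_integral_sub_pow_div_factorial_smul_le (hbound (n + 1)) t n

end TaylorIntegralRemainder

noncomputable def expGenFun (a : ℕ → ℂ) (z : ℂ) : ℂ :=
  ∑' r : ℕ, z ^ r / (r ! : ℂ) * a r

section ExpGenFun

open FormalMultilinearSeries

variable {a : ℕ → ℂ} {C ω : ℝ}

lemma norm_pow_div_factorial_mul_le (ha : ∀ r, ‖a r‖ ≤ C * ω ^ r) (z : ℂ) (r : ℕ) :
    ‖z ^ r / (r ! : ℂ) * a r‖ ≤ C * ((ω * ‖z‖) ^ r / r !) := by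
  rw [norm_mul, norm_div, norm_pow, Complex.norm_natCast]
  calc ‖z‖ ^ r / r ! * ‖a r‖ ≤ ‖z‖ ^ r / r ! * (C * ω ^ r) := by gcongr; exact ha r
    _ = C * ((ω * ‖z‖) ^ r / r !) := by ring

lemma summable_norm_pow_div_factorial_mul (ha : ∀ r, ‖a r‖ ≤ C * ω ^ r) (z : ℂ) :
    Summable fun r : ℕ => ‖z ^ r / (r ! : ℂ) * a r‖ :=
  .of_nonneg_of_le (fun _ => norm_nonneg _) (norm_pow_div_factorial_mul_le ha z)
    ((Real.summable_pow_div_factorial _).mul_left C)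

lemma radius_ofScalars_div_factorial_eq_top (ha : ∀ r, ‖a r‖ ≤ C * ω ^ r) :
    (ofScalars ℂ fun r => a r / (r ! : ℂ)).radius = ⊤ := by
  refine radius_eq_top_of_summable_norm _ fun R => ?_
  refine (summable_norm_pow_div_factorial_mul ha (R : ℂ)).congr fun r => ?_
  rw [ofScalars_norm, norm_mul, norm_div, norm_div, norm_pow, Complex.norm_real,
    Real.norm_eq_abs, NNReal.abs_eq]
  ring

lemma hasFPowerSeriesOnBall_expGenFun (ha : ∀ r, ‖a r‖ ≤ C * ω ^ r) :
    HasFPowerSeriesOnBall (expGenFun a) (ofScalars ℂ fun r => a r / (r ! : ℂ)) 0 ⊤ := by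
  have hp := (ofScalars ℂ fun r => a r / (r ! : ℂ)).hasFPowerSeriesOnBall
    (by rw [radius_ofScalars_div_factorial_eq_top ha]; exact ENNReal.zero_lt_top)
  rw [radius_ofScalars_div_factorial_eq_top ha] at hp
  convert hp using 1
  ext z
  refine tsum_congr fun r => ?_
  rw [ofScalars_apply_eq, smul_eq_mul]
  ring

theorem differentiable_expGenFun (ha : ∀ r, ‖a r‖ ≤ C * ω ^ r) :
    Differentiable ℂ (expGenFun a) := fun z =>
  ((hasFPowerSeriesOnBall_expGenFun ha).analyticAt_of_mem (by simp)).differentiableAt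

theorem norm_expGenFun_le (ha : ∀ r, ‖a r‖ ≤ C * ω ^ r) (z : ℂ) :
    ‖expGenFun a z‖ ≤ C * Real.exp (ω * ‖z‖) := by
  have hexp : HasSum (fun r : ℕ => C * ((ω * ‖z‖) ^ r / r !)) (C * Real.exp (ω * ‖z‖)) := by
    rw [Real.exp_eq_exp_ℝ, NormedSpace.exp_eq_tsum_div]
    exact (Real.summable_pow_div_factorial _).hasSum.mul_left C
  exact tsum_of_norm_bounded hexp (norm_pow_div_factorial_mul_le ha z)

theorem iteratedDeriv_expGenFun_zero (ha : ∀ r, ‖a r‖ ≤ C * ω ^ r) (k : ℕ) :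
    iteratedDeriv k (expGenFun a) 0 = a k := by
  have hk := (hasFPowerSeriesOnBall_expGenFun ha).factorial_smul 1 k
  rw [ofScalars_apply_eq, one_pow, smul_eq_mul, mul_one, nsmul_eq_mul] at hk
  rw [iteratedDeriv_eq_iteratedFDeriv, ← hk,
    mul_div_cancel₀ _ (Nat.cast_ne_zero.mpr k.factorial_ne_zero)]

end ExpGenFun

section Orbit

variable {E : Type*} [NormedAddCommGroup E] [NormedSpace ℂ E] {U : ℝ → E →L[ℂ] E}
  {V : E →ₗ[ℂ] E}

lemma hasDerivAt_orbit (hUadd : ∀ s t : ℝ, U (s + t) = (U s).comp (U t))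
    (hgen : ∀ x : E, HasDerivAt (fun t : ℝ => U t x) (V x) 0) (x : E) (t : ℝ) :
    HasDerivAt (fun s : ℝ => U s x) (U t (V x)) t := by
  have hshift : HasDerivAt (fun s : ℝ => U (s - t) x) (V x) t :=
    HasDerivAt.comp_sub_const t t (by simpa using hgen x)
  have h := ((U t).restrictScalars ℝ).hasFDerivAt.comp_hasDerivAt t hshift
  refine h.congr_of_eventuallyEq (.of_forall fun s => ?_)
  simp [← ContinuousLinearMap.comp_apply, ← hUadd]

theorem hasSum_pow_div_factorial_smul_orbit [CompleteSpace E] (hU0 : U 0 = 1)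
    (hUadd : ∀ s t : ℝ, U (s + t) = (U s).comp (U t))
    (hgen : ∀ x : E, HasDerivAt (fun t : ℝ => U t x) (V x) 0)
    (hcontr : ∀ (t : ℝ) (x : E), ‖U t x‖ ≤ ‖x‖) {f : E} {C ω : ℝ}
    (hf : ∀ k : ℕ, ‖(V ^ k) f‖ ≤ C * ω ^ k) (t : ℝ) :
    HasSum (fun r : ℕ => (t ^ r / r !) • (V ^ r) f) (U t f) := by
  have hderiv : ∀ (k : ℕ) (s : ℝ),
      HasDerivAt (fun s : ℝ => U s ((V ^ k) f)) (U s ((V ^ (k + 1)) f)) s := by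
    intro k s
    rw [pow_succ', Module.End.mul_apply]
    exact hasDerivAt_orbit hUadd hgen _ s
  simpa [hU0] using hasSum_pow_div_factorial_smul_of_hasDerivAt hderiv
    (fun k s => (hcontr s _).trans (hf k)) t

end Orbit

theorem group_orbit_entire_general (E : Type*) [NormedAddCommGroup E] [NormedSpace ℂ E]
    [CompleteSpace E] (U : ℝ → E →L[ℂ] E) (V : E →ₗ[ℂ] E)
    (hU0 : U 0 = 1) (hUadd : ∀ s t : ℝ, U (s + t) = (U s).comp (U t))
    (hiso : ∀ (t : ℝ) (x : E), ‖U t x‖ = ‖x‖)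
    (hgen : ∀ x : E, HasDerivAt (fun t : ℝ => U t x) (V x) 0)
    (f : E) (ω : ℝ) (hf : ∀ k : ℕ, ‖(V ^ k) f‖ ≤ ω ^ k * ‖f‖)
    (h : E →L[ℂ] ℂ) :
    Differentiable ℂ (fun z : ℂ => ∑' r : ℕ, (z ^ r / (r.factorial : ℂ)) * h ((V ^ r) f)) ∧
    (∀ z : ℂ, ‖∑' r : ℕ, (z ^ r / (r.factorial : ℂ)) * h ((V ^ r) f)‖ ≤
      ‖h‖ * ‖f‖ * Real.exp (ω * ‖z‖)) ∧
    (∀ t : ℝ, (∑' r : ℕ, ((t : ℂ) ^ r / (r.factorial : ℂ)) * h ((V ^ r) f)) = h (U t f)) ∧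
    (∀ t : ℝ, ‖∑' r : ℕ, ((t : ℂ) ^ r / (r.factorial : ℂ)) * h ((V ^ r) f)‖ ≤ ‖h‖ * ‖f‖) ∧
    (∀ k : ℕ,
      iteratedDeriv k (fun z : ℂ => ∑' r : ℕ, (z ^ r / (r.factorial : ℂ)) * h ((V ^ r) f)) 0 =
        h ((V ^ k) f)) := by
  have hbound : ∀ r : ℕ, ‖h ((V ^ r) f)‖ ≤ ‖h‖ * ‖f‖ * ω ^ r := fun r =>
    calc ‖h ((V ^ r) f)‖ ≤ ‖h‖ * (ω ^ r * ‖f‖) := h.le_opNorm_of_le (hf r)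
      _ = ‖h‖ * ‖f‖ * ω ^ r := by ring
  have hreal : ∀ t : ℝ, expGenFun (fun r => h ((V ^ r) f)) t = h (U t f) := by
    intro t
    have hsum := (hasSum_pow_div_factorial_smul_orbit hU0 hUadd hgen (fun t x => (hiso t x).le)
      (fun k => (hf k).trans_eq (mul_comm _ _)) t).mapL h
    refine (hsum.congr_fun fun r => ?_).tsum_eq
    simp [ContinuousLinearMap.map_smul_of_tower, Complex.real_smul]
  refine ⟨differentiable_expGenFun hbound, norm_expGenFun_le hbound, hreal, fun t => ?_,
    iteratedDeriv_expGenFun_zero hbound⟩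
  calc ‖expGenFun (fun r => h ((V ^ r) f)) t‖ = ‖h (U t f)‖ := by rw [hreal]
    _ ≤ ‖h‖ * ‖f‖ := h.le_opNorm_of_le (hiso t f).le

/-- Forward direction of Theorem 2.1: if `V` generates a strongly continuous isometry group
`e^{tV}` on a Banach space `E` and `‖V^k f‖ ≤ ω^k ‖f‖` for all `k`, then for every
functional `h` the function `t ↦ h(e^{tV} f)` extends to the entire function
`F(z) = ∑ z^r h(V^r f)/r!` of exponential type at most `ω`, bounded on `ℝ` by `‖h‖ ‖f‖`,
with `F^{(k)}(0) = h(V^k f)`. -/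
theorem group_orbit_entire (E : Type*) [NormedAddCommGroup E] [NormedSpace ℂ E]
    [CompleteSpace E] (U : ℝ → E →L[ℂ] E) (V : E →ₗ[ℂ] E)
    (hU0 : U 0 = 1) (hUadd : ∀ s t : ℝ, U (s + t) = (U s).comp (U t))
    (hiso : ∀ (t : ℝ) (x : E), ‖U t x‖ = ‖x‖)
    (hcont : ∀ x : E, Continuous fun t : ℝ => U t x)
    (hgen : ∀ x : E, HasDerivAt (fun t : ℝ => U t x) (V x) 0)
    (f : E) (ω : ℝ) (hω : 0 < ω) (hf : ∀ k : ℕ, ‖(V ^ k) f‖ ≤ ω ^ k * ‖f‖)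
    (h : E →L[ℂ] ℂ) :
    Differentiable ℂ (fun z : ℂ => ∑' r : ℕ, (z ^ r / (r.factorial : ℂ)) * h ((V ^ r) f)) ∧
    (∀ z : ℂ, ‖∑' r : ℕ, (z ^ r / (r.factorial : ℂ)) * h ((V ^ r) f)‖ ≤
      ‖h‖ * ‖f‖ * Real.exp (ω * ‖z‖)) ∧
    (∀ t : ℝ, (∑' r : ℕ, ((t : ℂ) ^ r / (r.factorial : ℂ)) * h ((V ^ r) f)) = h (U t f)) ∧
    (∀ t : ℝ, ‖∑' r : ℕ, ((t : ℂ) ^ r / (r.factorial : ℂ)) * h ((V ^ r) f)‖ ≤ ‖h‖ * ‖f‖) ∧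
    (∀ k : ℕ,
      iteratedDeriv k (fun z : ℂ => ∑' r : ℕ, (z ^ r / (r.factorial : ℂ)) * h ((V ^ r) f)) 0 =
        h ((V ^ k) f)) :=
  group_orbit_entire_general E U V hU0 hUadd hiso hgen f ω hf h
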